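/- For n >= 3, no preference profile satisfies both SPC and MaxProp. -/

import Mathlib

open scoped Classical

noncomputable section

/-- A two-sided matching market with `n` men and `n` women, each with a complete
strict preference order over the other side. `mpref m k` is man `m`'s `k`-th
favourite woman (0 = top), and `wpref w k` is woman `w`'s `k`-th favourite man. -/
structure Profile (n : ℕ) where
  mpref : Fin n → (Fin n ≃ Fin n)
  wpref : Fin n → (Fin n ≃ Fin n)

namespace Profile

variable {n : ℕ}

/-- rank (0 = best) of woman `w` in man `m`'s preference list -/
def mrank (P : Profile n) (m w : Fin n) : ℕ := ((P.mpref m).symm w : ℕ)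

/-- rank (0 = best) of man `m` in woman `w`'s preference list -/
def wrank (P : Profile n) (w m : Fin n) : ℕ := ((P.wpref w).symm m : ℕ)

/-- man `m` strictly prefers woman `w` to woman `w'` -/
def mPrefers (P : Profile n) (m w w' : Fin n) : Prop := P.mrank m w < P.mrank m w'

/-- woman `w` strictly prefers man `m` to man `m'` -/
def wPrefers (P : Profile n) (w m m' : Fin n) : Prop := P.wrank w m < P.wrank w m'

/-- top choice of man `m` -/
def topM (P : Profile n) (m : Fin n) : Fin n := P.mpref m ⟨0, m.pos⟩

/-- top choice of woman `w` -/
def topW (P : Profile n) (w : Fin n) : Fin n := P.wpref w ⟨0, w.pos⟩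

/-- the profile with the roles of men and women exchanged -/
def swap (P : Profile n) : Profile n := ⟨P.wpref, P.mpref⟩

/-- State of the men-proposing deferred acceptance algorithm:
`next m` = number of proposals man `m` has made so far,
`held w` = the man woman `w` currently tentatively holds (if any). -/
structure DAState (n : ℕ) where
  next : Fin n → ℕ
  held : Fin n → Option (Fin n)

def initState (n : ℕ) : DAState n := ⟨fun _ => 0, fun _ => none⟩

/-- the men currently unmatched (held by no woman) -/
def unmatched (s : DAState n) : Finset (Fin n) :=
  Finset.univ.filter fun m => ∀ w : Fin n, s.held w ≠ some m

/-- the woman man `m` proposes to next: his most preferred woman among those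
who have not rejected him yet -/
def target (P : Profile n) (s : DAState n) (m : Fin n) : Fin n :=
  P.mpref m ⟨s.next m % n, Nat.mod_lt _ m.pos⟩

/-- the men proposing to woman `w` in the current round -/
def proposers (P : Profile n) (s : DAState n) (w : Fin n) : Finset (Fin n) :=
  (unmatched s).filter fun m => target P s m = w

/-- one round of the men-proposing deferred acceptance algorithm: every
unmatched man proposes to his favourite woman who has not rejected him yet,
and every woman tentatively holds her favourite among her current partner
and the new proposers, rejecting the rest -/
def step (P : Profile n) (s : DAState n) : DAState n where
  next := fun m => if m ∈ unmatched s then s.next m + 1 else s.next m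
  held := fun w => ((proposers P s w ∪ (s.held w).toFinset).toList).argmin (P.wrank w)

/-- the state after `k` rounds of men-proposing deferred acceptance -/
def stateAt (P : Profile n) (k : ℕ) : DAState n := (step P)^[k] (initState n)

/-- the final state of men-proposing deferred acceptance
(`n * n + 1` iterations is always enough to reach the fixed point) -/
def finalState (P : Profile n) : DAState n := stateAt P (n * n + 1)

/-- total number of proposals made during the men-proposing DA -/
def totalProposals (P : Profile n) : ℕ := ∑ m : Fin n, (finalState P).next m

/-- number of rounds of the men-proposing DA (rounds in which some proposal is made) -/
def rounds (P : Profile n) : ℕ :=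
  ((Finset.range (n * n + 1)).filter fun k => (unmatched (stateAt P k)).Nonempty).card

/-- total number of proposals received by woman `w` during the men-proposing DA -/
def proposalsTo (P : Profile n) (w : Fin n) : ℕ :=
  ∑ k ∈ Finset.range (n * n + 1), (proposers P (stateAt P k) w).card

/-- man `m` proposes to woman `w` at some point during the men-proposing DA -/
def proposedTo (P : Profile n) (m w : Fin n) : Prop :=
  ∃ k < n * n + 1, m ∈ proposers P (stateAt P k) w

/-- the men-proposing DA makes the maximum possible number `n² - n + 1` of proposals -/
def MaxProp (P : Profile n) : Prop := P.totalProposals = n * n + 1 - n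

/-- the men-proposing DA takes the maximum possible number `n² - 2n + 2` of rounds -/
def MaxRou (P : Profile n) : Prop := P.rounds = n * n + 2 - 2 * n

/-- a matching (a bijection man ↦ woman) is stable iff no man-woman pair mutually
prefer each other to their assigned partners -/
def Stable (P : Profile n) (μ : Fin n ≃ Fin n) : Prop :=
  ¬ ∃ (m w : Fin n), P.mPrefers m w (μ m) ∧ P.wPrefers w m (μ.symm w)

/-- the profile admits a unique stable matching -/
def USM (P : Profile n) : Prop := ∃! μ : Fin n ≃ Fin n, P.Stable μ

/-- the sequential preference condition of Eeckhout (2000) -/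
def SPC (P : Profile n) : Prop :=
  ∃ σ τ : Equiv.Perm (Fin n), ∀ i j : Fin n, i < j →
    P.mPrefers (σ i) (τ i) (τ j) ∧ P.wPrefers (τ i) (σ i) (σ j)

/-- the no crossing condition of Clark (2006) -/
def NCC (P : Profile n) : Prop :=
  ∃ σ τ : Equiv.Perm (Fin n), ∀ i j k l : Fin n, i < j → k < l →
    (P.mPrefers (σ i) (τ l) (τ k) → P.mPrefers (σ j) (τ l) (τ k)) ∧
    (P.wPrefers (τ k) (σ j) (σ i) → P.wPrefers (τ l) (σ j) (σ i))

end Profile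

/-!
Under SPC, `m₁` and `w₁` are each other's top choices, so `m₁` proposes once and is never
rejected. Since no man proposes more than `n` times, a total of `n² - n + 1` proposals then
forces every other man, in particular `m₂`, to propose `n` times. But `m₂` ranks `w₂` first or
second, and the only man `w₂` prefers to `m₂` is `m₁`, who stays with `w₁`; so once `m₂`
proposes to `w₂` he is never rejected again and makes at most `2 < n` proposals.
-/

namespace Profile

variable {n : ℕ} {P : Profile n}

section Sequential

variable {σ τ : Equiv.Perm (Fin n)}

lemma symm_lt_of_mPrefers (hP : ∀ i j, i < j → P.mPrefers (σ i) (τ i) (τ j)) {i : Fin n}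
    {w : Fin n} (h : P.mPrefers (σ i) w (τ i)) : τ.symm w < i := by
  by_contra! hle
  rcases hle.eq_or_lt with heq | hlt
  · rw [heq, Equiv.apply_symm_apply] at h
    exact lt_irrefl _ h
  · have := hP i _ hlt
    rw [Equiv.apply_symm_apply] at this
    exact lt_asymm h this

lemma mrank_le_of_sequential (hP : ∀ i j, i < j → P.mPrefers (σ i) (τ i) (τ j)) (i : Fin n) :
    P.mrank (σ i) (τ i) ≤ i := by
  set r := (P.mpref (σ i)).symm (τ i)
  have hmaps : Set.MapsTo (fun k => τ.symm (P.mpref (σ i) k)) (Finset.Iio r) (Finset.Iio i) := by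
    intro k hk
    refine Finset.mem_Iio.mpr (symm_lt_of_mPrefers hP ?_)
    simpa [mPrefers, mrank, r] using Finset.mem_Iio.mp hk
  have hinj : Set.InjOn (fun k => τ.symm (P.mpref (σ i) k)) (Finset.Iio r) :=
    fun _ _ _ _ h => (P.mpref (σ i)).injective (τ.symm.injective h)
  simpa [mrank, r] using Finset.card_le_card_of_injOn _ hmaps hinj

lemma symm_lt_of_wPrefers (hP : ∀ i j, i < j → P.wPrefers (τ i) (σ i) (σ j)) {i : Fin n}
    {m : Fin n} (h : P.wPrefers (τ i) m (σ i)) : σ.symm m < i :=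
  symm_lt_of_mPrefers (P := P.swap) hP h

lemma wrank_le_of_sequential (hP : ∀ i j, i < j → P.wPrefers (τ i) (σ i) (σ j)) (i : Fin n) :
    P.wrank (τ i) (σ i) ≤ i :=
  mrank_le_of_sequential (P := P.swap) hP i

end Sequential

section DeferredAcceptance

variable (P)

lemma mem_unmatched {s : DAState n} {m : Fin n} :
    m ∈ unmatched s ↔ ∀ w, s.held w ≠ some m := by
  simp [unmatched]

lemma stateAt_succ (k : ℕ) : stateAt P (k + 1) = step P (stateAt P k) :=
  Function.iterate_succ_apply' _ _ _

lemma next_step (s : DAState n) (m : Fin n) :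
    (step P s).next m = if m ∈ unmatched s then s.next m + 1 else s.next m := rfl

lemma wrank_injective (w : Fin n) : Function.Injective (P.wrank w) :=
  fun _ _ h => (P.wpref w).symm.injective (Fin.val_injective h)

variable {P}

lemma target_eq_of_next_eq {s : DAState n} {m w : Fin n} (h : s.next m = P.mrank m w) :
    target P s m = w := by
  have hr : (⟨s.next m % n, Nat.mod_lt _ m.pos⟩ : Fin n) = (P.mpref m).symm w :=
    Fin.ext (by simp [h, mrank, Nat.mod_eq_of_lt])
  rw [target, hr, Equiv.apply_symm_apply]

lemma exists_held_step_le {s : DAState n} {w m : Fin n}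
    (h : m ∈ proposers P s w ∪ (s.held w).toFinset) :
    ∃ m', (step P s).held w = some m' ∧ P.wrank w m' ≤ P.wrank w m := by
  have hl : m ∈ (proposers P s w ∪ (s.held w).toFinset).toList := Finset.mem_toList.mpr h
  cases hm' : (step P s).held w with
  | none =>
    rw [step, List.argmin_eq_none] at hm'
    simp [hm'] at hl
  | some m' => exact ⟨m', rfl, List.le_of_mem_argmin hl hm'⟩

lemma held_step_cases {s : DAState n} {w m : Fin n} (h : (step P s).held w = some m) :
    m ∈ proposers P s w ∨ s.held w = some m := by
  simpa using Finset.mem_toList.mp (List.argmin_mem h)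

lemma held_step_ne_none {s : DAState n} {w : Fin n} (h : s.held w ≠ none) :
    (step P s).held w ≠ none := by
  obtain ⟨m, hm⟩ := Option.ne_none_iff_exists'.mp h
  obtain ⟨m', hm', -⟩ :=
    exists_held_step_le (P := P) (Finset.mem_union_right _ (by simpa using hm))
  simp [hm']

variable (P) in
structure Invariant (s : DAState n) : Prop where
  held_inj : ∀ w w' m, s.held w = some m → s.held w' = some m → w = w'
  held_of_lt_next : ∀ m (i : Fin n), (i : ℕ) < s.next m → s.held (P.mpref m i) ≠ none
  next_le : ∀ m, s.next m ≤ n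

/-- Every woman holds someone once `m` has proposed to all of them, and `held` is injective,
so by pigeonhole every man is held. -/
lemma Invariant.not_mem_unmatched {s : DAState n} (hs : Invariant P s) {m : Fin n}
    (hm : s.next m = n) : m ∉ unmatched s := by
  have hheld : ∀ w, ∃ m', s.held w = some m' := fun w =>
    Option.ne_none_iff_exists'.mp
      (by simpa using hs.held_of_lt_next m ((P.mpref m).symm w) (by omega))
  choose g hg using hheld
  have hg_inj : Function.Injective g := fun w w' h =>
    hs.held_inj w w' (g w) (hg w) (h ▸ hg w')
  obtain ⟨w, rfl⟩ := Finite.surjective_of_injective hg_inj m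
  exact fun hum => mem_unmatched.mp hum w (hg w)

lemma Invariant.step {s : DAState n} (hs : Invariant P s) : Invariant P (step P s) where
  held_inj w w' m hw hw' := by
    rcases held_step_cases hw with h | h <;> rcases held_step_cases hw' with h' | h'
    · exact (Finset.mem_filter.mp h).2.symm.trans (Finset.mem_filter.mp h').2
    · exact absurd h' (mem_unmatched.mp (Finset.mem_filter.mp h).1 w')
    · exact absurd h (mem_unmatched.mp (Finset.mem_filter.mp h').1 w)
    · exact hs.held_inj w w' m h h'
  held_of_lt_next m i hi := by
    rw [next_step] at hi
    split_ifs at hi with hum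
    · rcases Nat.lt_succ_iff_lt_or_eq.mp hi with hlt | heq
      · exact held_step_ne_none (hs.held_of_lt_next m i hlt)
      · have htarget : target P s m = P.mpref m i :=
          target_eq_of_next_eq (by simp [heq, mrank])
        obtain ⟨m', hm', -⟩ := exists_held_step_le (P := P)
          (Finset.mem_union_left _ (Finset.mem_filter.mpr ⟨hum, htarget⟩))
        simp [hm']
    · exact held_step_ne_none (hs.held_of_lt_next m i hi)
  next_le m := by
    rw [next_step]
    split_ifs with hum
    · have hne : s.next m ≠ n := fun h => hs.not_mem_unmatched h hum
      have := hs.next_le m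
      omega
    · exact hs.next_le m

variable (P) in
lemma invariant_stateAt (k : ℕ) : Invariant P (stateAt P k) := by
  induction k with
  | zero => exact ⟨by simp [stateAt, initState], by simp [stateAt, initState],
      by simp [stateAt, initState]⟩
  | succ k ih => rw [stateAt_succ]; exact ih.step

lemma exists_held_le_of_held {k k' : ℕ} {w m : Fin n} (h : (stateAt P k).held w = some m)
    (hk : k ≤ k') : ∃ m', (stateAt P k').held w = some m' ∧ P.wrank w m' ≤ P.wrank w m := by
  induction k', hk using Nat.le_induction with
  | base => exact ⟨m, h, le_rfl⟩
  | succ k' _ ih =>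
    obtain ⟨m', hm', hle⟩ := ih
    obtain ⟨m'', hm'', hle'⟩ :=
      exists_held_step_le (P := P) (Finset.mem_union_right _ (by simpa using hm'))
    rw [stateAt_succ]
    exact ⟨m'', hm'', hle'.trans hle⟩

lemma next_eq_of_forall_held {k₀ k : ℕ} {m : Fin n}
    (h : ∀ k, k₀ ≤ k → ∃ w, (stateAt P k).held w = some m) (hk : k₀ ≤ k) :
    (stateAt P k).next m = (stateAt P k₀).next m := by
  induction k, hk using Nat.le_induction with
  | base => rfl
  | succ k hk ih =>
    obtain ⟨w, hw⟩ := h k hk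
    rw [stateAt_succ, next_step, if_neg fun hum => mem_unmatched.mp hum w hw, ih]

lemma exists_mem_proposers_of_mrank_lt {K : ℕ} {m w : Fin n}
    (h : P.mrank m w < (stateAt P K).next m) :
    ∃ j < K, (stateAt P j).next m = P.mrank m w ∧ m ∈ proposers P (stateAt P j) w := by
  induction K with
  | zero => simp [stateAt, initState] at h
  | succ K ih =>
    by_cases hK : P.mrank m w < (stateAt P K).next m
    · obtain ⟨j, hj, hnext, hprop⟩ := ih hK
      exact ⟨j, by omega, hnext, hprop⟩
    · rw [stateAt_succ, next_step] at h
      split_ifs at h with hum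
      · have hnext : (stateAt P K).next m = P.mrank m w := by omega
        exact ⟨K, by omega, hnext, Finset.mem_filter.mpr ⟨hum, target_eq_of_next_eq hnext⟩⟩
      · exact absurd h hK

lemma held_stateAt_succ_of_mutual_top {m w : Fin n} (hm : P.mrank m w = 0)
    (hw : P.wrank w m = 0) (k : ℕ) : (stateAt P (k + 1)).held w = some m := by
  have hprop : m ∈ proposers P (stateAt P 0) w :=
    Finset.mem_filter.mpr ⟨by simp [mem_unmatched, stateAt, initState],
      target_eq_of_next_eq hm.symm⟩
  obtain ⟨m₁, h₁, hle₁⟩ := exists_held_step_le (Finset.mem_union_left _ hprop)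
  rw [← stateAt_succ] at h₁
  obtain ⟨m', hm', hle⟩ := exists_held_le_of_held h₁ (Nat.le_add_left 1 k)
  rwa [wrank_injective P w (show P.wrank w m' = P.wrank w m by omega)] at hm'

lemma finalState_next_eq_one_of_mutual_top {m w : Fin n} (hm : P.mrank m w = 0)
    (hw : P.wrank w m = 0) : (finalState P).next m = 1 := by
  have hheld : ∀ k, 1 ≤ k → ∃ w', (stateAt P k).held w' = some m := fun k hk => by
    obtain ⟨k, rfl⟩ : ∃ i, k = i + 1 := ⟨k - 1, by omega⟩
    exact ⟨w, held_stateAt_succ_of_mutual_top hm hw k⟩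
  rw [finalState, next_eq_of_forall_held hheld (by omega), stateAt_succ, next_step,
    if_pos (by simp [mem_unmatched, stateAt, initState])]
  rfl

/-- Once `m` proposes to `w` she holds him for good: nobody she prefers can ever displace him. -/
lemma finalState_next_le_of_rivals_held {m w : Fin n}
    (hrivals : ∀ m', P.wPrefers w m' m →
      ∃ w' ≠ w, ∀ k, (stateAt P (k + 1)).held w' = some m') :
    (finalState P).next m ≤ P.mrank m w + 1 := by
  by_contra! hlt
  have hproposes : P.mrank m w < (stateAt P (n * n + 1)).next m := by
    rw [finalState] at hlt
    omega
  obtain ⟨j, hj, hnext, hprop⟩ := exists_mem_proposers_of_mrank_lt hproposes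
  obtain ⟨m₁, h₁, hle₁⟩ := exists_held_step_le (Finset.mem_union_left _ hprop)
  rw [← stateAt_succ] at h₁
  have hheld : ∀ k, j + 1 ≤ k → ∃ w', (stateAt P k).held w' = some m := fun k hk => by
    obtain ⟨m', hm', hle⟩ := exists_held_le_of_held h₁ hk
    rcases (hle.trans hle₁).lt_or_eq with hpref | heq
    · obtain ⟨w', hw', hheld'⟩ := hrivals m' hpref
      obtain ⟨k, rfl⟩ : ∃ i, k = i + 1 := ⟨k - 1, by omega⟩
      exact absurd ((invariant_stateAt P _).held_inj w w' m' hm' (hheld' k)) hw'.symm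
    · exact ⟨w, by rwa [wrank_injective P w heq] at hm'⟩
  have hfinal := next_eq_of_forall_held hheld (show j + 1 ≤ n * n + 1 by omega)
  rw [stateAt_succ P j, next_step, if_pos (Finset.mem_filter.mp hprop).1, hnext] at hfinal
  rw [finalState, hfinal] at hlt
  omega

lemma MaxProp.finalState_next_eq_of_ne (hP : P.MaxProp) {m m' : Fin n}
    (hm : (finalState P).next m = 1) (hm' : m' ≠ m) : (finalState P).next m' = n := by
  have hle : ∀ x ∈ Finset.univ.erase m, (finalState P).next x ≤ n :=
    fun x _ => (invariant_stateAt P _).next_le x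
  have hsum : ∑ x ∈ Finset.univ.erase m, (finalState P).next x =
      ∑ _x ∈ Finset.univ.erase m, n := by
    have hsplit := Finset.sum_erase_add Finset.univ (fun x => (finalState P).next x)
      (Finset.mem_univ m)
    rw [Finset.sum_const, Finset.card_erase_of_mem (Finset.mem_univ _), Finset.card_univ,
      Fintype.card_fin, smul_eq_mul, Nat.sub_mul, one_mul]
    have := Nat.le_mul_self n
    rw [MaxProp, totalProposals] at hP
    omega
  exact (Finset.sum_eq_sum_iff_of_le hle).mp hsum m'
    (Finset.mem_erase.mpr ⟨hm', Finset.mem_univ _⟩)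

end DeferredAcceptance

end Profile

/-- For `n ≥ 3`, no profile satisfies both SPC and MaxProp. -/
theorem spc_maxProp_disjoint (n : ℕ) (hn : 3 ≤ n) (P : Profile n) :
    ¬ (P.SPC ∧ P.MaxProp) := by
  rintro ⟨⟨σ, τ, hspc⟩, hmax⟩
  have hmen := fun i j hij => (hspc i j hij).1
  have hwomen := fun i j hij => (hspc i j hij).2
  let i₀ : Fin n := ⟨0, by omega⟩
  let i₁ : Fin n := ⟨1, by omega⟩
  have hi : i₀ < i₁ := Fin.mk_lt_mk.mpr Nat.zero_lt_one
  have hm₀ : P.mrank (σ i₀) (τ i₀) = 0 :=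
    Nat.le_zero.mp (Profile.mrank_le_of_sequential hmen i₀)
  have hw₀ : P.wrank (τ i₀) (σ i₀) = 0 :=
    Nat.le_zero.mp (Profile.wrank_le_of_sequential hwomen i₀)
  have hnext₁ : P.finalState.next (σ i₁) = n :=
    hmax.finalState_next_eq_of_ne (Profile.finalState_next_eq_one_of_mutual_top hm₀ hw₀)
      (σ.injective.ne hi.ne')
  have hle : P.finalState.next (σ i₁) ≤ P.mrank (σ i₁) (τ i₁) + 1 := by
    refine Profile.finalState_next_le_of_rivals_held fun m hm =>
      ⟨τ i₀, τ.injective.ne hi.ne, fun k => ?_⟩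
    have hrival : σ.symm m = i₀ :=
      Fin.ext (Nat.lt_one_iff.mp (Profile.symm_lt_of_wPrefers hwomen hm))
    rw [← σ.apply_symm_apply m, hrival]
    exact Profile.held_stateAt_succ_of_mutual_top hm₀ hw₀ k
  have hm₁ : P.mrank (σ i₁) (τ i₁) ≤ 1 := Profile.mrank_le_of_sequential hmen i₁
  omega
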